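/- arXiv:1105.0477 — 2 statements merged into one kernel-verified Lean document; each statement's English description precedes it below -/
import Mathlib

section
/- Let d, k ≥ 1 be natural numbers and G a finite simple graph. If the number of vertices v of G with 1 ≤ deg(v) ≤ d is greater than (d+1)·(k−1)², then G contains a k-edge induced subgraph. -/
/-- `G` contains a `k`-edge induced subgraph: there is a nonempty set `S` of vertices
such that the number of edges of `G` with both endpoints in `S` is exactly `k`. -/
def HasKEdgeInducedSubgraph {V : Type*} (G : SimpleGraph V) (k : ℕ) : Prop :=
  ∃ S : Finset V, S.Nonempty ∧ {e ∈ G.edgeSet | ∀ v ∈ e, v ∈ S}.ncard = k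

/-!
A greedily chosen independent set `I` of vertices of degree in `[1, d]` has more than `(k-1)²`
elements. If some vertex has `k` neighbours in `I`, it spans a star with `k` edges with them.
Otherwise repeatedly pick `v ∈ I` and a neighbour `w` of `v`, and discard the at most `k - 1`
vertices of `I` adjacent to `w`; this yields at least `k` leaves `v` with hubs `w`. Building the
hubs `T` and leaves `R` up from the last pair, the earlier leaves are not adjacent to the new hub,
and the new leaf has at most `#T + 1 ≤ 1 + ∑ v ∈ R, adjCount T v` neighbours among the hubs, so the
weights `adjCount T` on `R` have all subset sums up to their total. Leaves being independent,
`T ∪ J` spans `inducedEdgeCount T + ∑ v ∈ J, adjCount T v` edges for `J ⊆ R`; these intervals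
of edge counts, one per stage, cover `[0, k]`.
-/

open Finset

section SubsetSums

variable {ι : Type*} {δ δ' : ι → ℕ} {R : Finset ι} {a : ι}

def HasAllSubsetSums (δ : ι → ℕ) (R : Finset ι) : Prop :=
  ∀ n ≤ ∑ i ∈ R, δ i, ∃ J ⊆ R, ∑ i ∈ J, δ i = n

theorem hasAllSubsetSums_empty (δ : ι → ℕ) : HasAllSubsetSums δ ∅ := fun n hn =>
  ⟨∅, subset_refl _, by simp at hn; simp [hn]⟩

theorem HasAllSubsetSums.congr (h : HasAllSubsetSums δ R) (hδ : ∀ i ∈ R, δ i = δ' i) :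
    HasAllSubsetSums δ' R := by
  intro n hn
  rw [← sum_congr rfl hδ] at hn
  obtain ⟨J, hJ, rfl⟩ := h n hn
  exact ⟨J, hJ, sum_congr rfl fun i hi => (hδ i (hJ hi)).symm⟩

theorem HasAllSubsetSums.insert [DecidableEq ι] (h : HasAllSubsetSums δ R) (ha : a ∉ R)
    (hδa : δ a ≤ ∑ i ∈ R, δ i + 1) : HasAllSubsetSums δ (insert a R) := by
  intro n hn
  rw [sum_insert ha] at hn
  by_cases hnR : n ≤ ∑ i ∈ R, δ i
  · obtain ⟨J, hJ, hJn⟩ := h n hnR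
    exact ⟨J, hJ.trans (subset_insert a R), hJn⟩
  · obtain ⟨J, hJ, hJn⟩ := h (n - δ a) (by omega)
    refine ⟨Insert.insert a J, Finset.insert_subset_insert a hJ, ?_⟩
    rw [sum_insert fun haJ => ha (hJ haJ), hJn]
    omega

end SubsetSums

namespace SimpleGraph

variable {V : Type*} (G : SimpleGraph V) [DecidableRel G.Adj]

def adjCount (T : Finset V) (v : V) : ℕ := #{u ∈ T | G.Adj v u}

def inducedEdgeCount (S : Finset V) : ℕ := #{e ∈ S.sym2 | e ∈ G.edgeSet}

theorem ncard_setOf_mem_edgeSet_forall_mem (S : Finset V) :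
    {e ∈ G.edgeSet | ∀ v ∈ e, v ∈ S}.ncard = G.inducedEdgeCount S := by
  rw [inducedEdgeCount, ← Set.ncard_coe_finset]
  congr 1
  ext e
  simp [mem_sym2_iff, and_comm]

@[simp]
theorem inducedEdgeCount_empty : G.inducedEdgeCount ∅ = 0 := by
  simp [inducedEdgeCount]

theorem hasKEdgeInducedSubgraph_of_inducedEdgeCount_eq {k : ℕ} (hk : 1 ≤ k) {S : Finset V}
    (hS : G.inducedEdgeCount S = k) : HasKEdgeInducedSubgraph G k := by
  refine ⟨S, ?_, (G.ncard_setOf_mem_edgeSet_forall_mem S).trans hS⟩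
  rcases S.eq_empty_or_nonempty with rfl | hne
  · rw [inducedEdgeCount_empty] at hS
    omega
  · exact hne

theorem inducedEdgeCount_eq_zero_of_isIndepSet {S : Finset V} (hS : G.IsIndepSet (S : Set V)) :
    G.inducedEdgeCount S = 0 := by
  rw [inducedEdgeCount, card_eq_zero, filter_eq_empty_iff]
  intro e he
  induction e using Sym2.ind with
  | _ a b =>
    rw [mem_sym2_iff] at he
    exact fun hab => hS (he a (by simp)) (he b (by simp)) (G.ne_of_adj hab) hab

structure IsScaffold (I T R : Finset V) : Prop where
  disjoint : Disjoint T I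
  subset : R ⊆ I
  card_le_card : #T ≤ #R
  card_le_sum : #R ≤ ∑ v ∈ R, G.adjCount T v
  hasAllSubsetSums : HasAllSubsetSums (G.adjCount T) R
  exists_inducedEdgeCount_eq :
    ∀ n ≤ G.inducedEdgeCount T + ∑ v ∈ R, G.adjCount T v, ∃ S, G.inducedEdgeCount S = n

variable {G} in
theorem isScaffold_empty (I : Finset V) : G.IsScaffold I ∅ ∅ where
  disjoint := disjoint_empty_left I
  subset := empty_subset I
  card_le_card := le_rfl
  card_le_sum := by simp
  hasAllSubsetSums := hasAllSubsetSums_empty _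
  exists_inducedEdgeCount_eq n hn := ⟨∅, by simp at hn; simp [hn]⟩

variable [DecidableEq V]

theorem exists_isIndepSet_subset_card_le [Fintype V] (A : Finset V) {d : ℕ}
    (hA : ∀ v ∈ A, G.degree v ≤ d) :
    ∃ I ⊆ A, G.IsIndepSet (I : Set V) ∧ #A ≤ (d + 1) * #I := by
  set indepSubsets := A.powerset.filter fun J : Finset V => G.IsIndepSet (J : Set V)
  -- a maximum independent subset `I` of `A` dominates `A`
  obtain ⟨I, hI, hmax⟩ := exists_max_image indepSubsets card ⟨∅, by simp [indepSubsets]⟩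
  obtain ⟨hIA, hIind⟩ := mem_filter.1 hI
  rw [mem_powerset] at hIA
  have hdom : A ⊆ I.biUnion fun v => insert v (G.neighborFinset v) := by
    intro u hu
    by_contra hu'
    simp only [mem_biUnion, mem_insert, mem_neighborFinset, not_exists, not_and, not_or] at hu'
    have hins : insert u I ∈ indepSubsets := by
      refine mem_filter.2 ⟨mem_powerset.2 (insert_subset hu hIA), ?_⟩
      rw [coe_insert]
      exact hIind.insert fun b hb _ => ⟨fun h => (hu' b hb).2 h.symm, (hu' b hb).2⟩
    have := hmax _ hins
    rw [card_insert_of_notMem fun huI => (hu' u huI).1 rfl] at this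
    omega
  refine ⟨I, hIA, hIind, ?_⟩
  calc #A ≤ #(I.biUnion fun v => insert v (G.neighborFinset v)) := card_le_card hdom
    _ ≤ ∑ v ∈ I, #(insert v (G.neighborFinset v)) := card_biUnion_le
    _ ≤ ∑ _v ∈ I, (d + 1) := sum_le_sum fun v hv =>
        (card_insert_le _ _).trans <| by
          rw [card_neighborFinset_eq_degree]
          exact Nat.succ_le_succ (hA v (hIA hv))
    _ = (d + 1) * #I := by rw [sum_const, smul_eq_mul, mul_comm]

theorem inducedEdgeCount_insert {a : V} {s : Finset V} (ha : a ∉ s) :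
    G.inducedEdgeCount (insert a s) = G.inducedEdgeCount s + G.adjCount s a := by
  rw [inducedEdgeCount, ← cons_eq_insert _ _ ha, sym2_cons, filter_disjUnion, card_disjUnion,
    filter_map, card_map, inducedEdgeCount, adjCount, add_comm]
  congr 2
  ext b
  simp only [mem_filter, mem_cons, Function.comp_apply, Sym2.mkEmbedding_apply, mem_edgeSet]
  exact and_congr_left fun hab => or_iff_right (G.ne_of_adj hab).symm

theorem inducedEdgeCount_insert_le (a : V) (s : Finset V) :
    G.inducedEdgeCount (insert a s) ≤ G.inducedEdgeCount s + #s := by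
  by_cases ha : a ∈ s
  · rw [insert_eq_of_mem ha]
    omega
  · rw [G.inducedEdgeCount_insert ha]
    exact Nat.add_le_add_left (card_filter_le _ _) _

theorem inducedEdgeCount_union_of_isIndepSet {T J : Finset V} (hJ : G.IsIndepSet (J : Set V))
    (hTJ : Disjoint T J) :
    G.inducedEdgeCount (T ∪ J) = G.inducedEdgeCount T + ∑ v ∈ J, G.adjCount T v := by
  induction J using Finset.induction_on with
  | empty => simp
  | insert v J hvJ ih =>
    have hJ' : G.IsIndepSet (J : Set V) := hJ.mono (by simp)
    have hvT : v ∉ T := fun hvT => Finset.disjoint_left.1 hTJ hvT (mem_insert_self v J)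
    rw [union_insert, G.inducedEdgeCount_insert (by simp [hvT, hvJ]),
      ih hJ' (disjoint_of_subset_right (subset_insert v J) hTJ), sum_insert hvJ]
    have : G.adjCount (T ∪ J) v = G.adjCount T v := by
      have hvJ : {u ∈ J | G.Adj v u} = ∅ := filter_false_of_mem fun u hu hvu =>
        hJ (mem_insert_self v J) (mem_insert_of_mem hu) (G.ne_of_adj hvu) hvu
      rw [adjCount, adjCount, filter_union, hvJ, union_empty]
    omega

variable {G}

theorem IsScaffold.insert_insert {I T R : Finset V} {v w : V} (hI : G.IsIndepSet (I : Set V))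
    (h : G.IsScaffold I T R) (hv : v ∈ I) (hvR : v ∉ R) (hvw : G.Adj v w)
    (hRw : ∀ u ∈ R, ¬ G.Adj u w) : G.IsScaffold I (insert w T) (insert v R) := by
  have hwI : w ∉ I := fun hw => hI hv hw (G.ne_of_adj hvw) hvw
  have hR : ∀ u ∈ R, G.adjCount (insert w T) u = G.adjCount T u := fun u hu => by
    rw [adjCount, adjCount, filter_insert, if_neg (hRw u hu)]
  have hsumR : ∑ u ∈ R, G.adjCount (insert w T) u = ∑ u ∈ R, G.adjCount T u :=
    sum_congr rfl hR
  have hsum : ∑ u ∈ insert v R, G.adjCount (insert w T) u =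
      G.adjCount (insert w T) v + ∑ u ∈ R, G.adjCount T u := by
    rw [sum_insert hvR, hsumR]
  have hv_pos : 1 ≤ G.adjCount (insert w T) v :=
    card_pos.2 ⟨w, mem_filter.2 ⟨mem_insert_self w T, hvw⟩⟩
  have hv_le : G.adjCount (insert w T) v ≤ #(insert w T) := card_filter_le _ _
  have hT : #(insert w T) ≤ #T + 1 := card_insert_le w T
  have hRcard : #(insert v R) = #R + 1 := card_insert_of_notMem hvR
  have hTR := h.card_le_card
  have hRsum := h.card_le_sum
  have hsums : HasAllSubsetSums (G.adjCount (insert w T)) (insert v R) :=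
    (h.hasAllSubsetSums.congr fun u hu => (hR u hu).symm).insert hvR (by omega)
  refine ⟨disjoint_insert_left.2 ⟨hwI, h.disjoint⟩, insert_subset hv h.subset, by omega,
    by omega, hsums, ?_⟩
  intro n hn
  rw [hsum] at hn
  by_cases hn' : n ≤ G.inducedEdgeCount T + ∑ u ∈ R, G.adjCount T u
  · exact h.exists_inducedEdgeCount_eq n hn'
  -- the hub `w` adds at most `#T ≤ ∑ u ∈ R, adjCount T u` edges, so `n` is at least
  -- `inducedEdgeCount (insert w T)`
  have hTw := G.inducedEdgeCount_insert_le w T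
  obtain ⟨J, hJ, hJn⟩ := hsums (n - G.inducedEdgeCount (insert w T)) (by rw [hsum]; omega)
  have hJI : J ⊆ I := hJ.trans (insert_subset hv h.subset)
  refine ⟨insert w T ∪ J, ?_⟩
  rw [G.inducedEdgeCount_union_of_isIndepSet (hI.mono (coe_subset.2 hJI))
    (disjoint_of_subset_right hJI (disjoint_insert_left.2 ⟨hwI, h.disjoint⟩)), hJn]
  omega

theorem exists_isScaffold {I : Finset V} (hI : G.IsIndepSet (I : Set V))
    (hnbr : ∀ v ∈ I, ∃ w, G.Adj v w) {c : ℕ} (hc : ∀ w, G.adjCount I w ≤ c) :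
    ∀ I' ⊆ I, ∃ T R, G.IsScaffold I T R ∧ R ⊆ I' ∧ #I' ≤ c * #R := by
  intro I'
  induction I' using Finset.strongInduction with
  | H I' ih =>
    intro hI'
    rcases I'.eq_empty_or_nonempty with rfl | ⟨v, hv⟩
    · exact ⟨∅, ∅, isScaffold_empty I, subset_refl _, by simp⟩
    obtain ⟨w, hvw⟩ := hnbr v (hI' hv)
    obtain ⟨T, R, hS, hR, hcard⟩ := ih {u ∈ I' | ¬ G.Adj w u}
      (filter_ssubset.2 ⟨v, hv, not_not.2 hvw.symm⟩) ((filter_subset _ _).trans hI')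
    have hRw : ∀ u ∈ R, ¬ G.Adj u w := fun u hu hadj => (mem_filter.1 (hR hu)).2 hadj.symm
    have hvR : v ∉ R := fun hvR => hRw v hvR hvw
    refine ⟨insert w T, insert v R, hS.insert_insert hI (hI' hv) hvR hvw hRw,
      insert_subset hv (hR.trans (filter_subset _ _)), ?_⟩
    have hsplit := card_filter_add_card_filter_not (s := I') (G.Adj w)
    have hnbrs : #{u ∈ I' | G.Adj w u} ≤ c :=
      (card_le_card (filter_subset_filter _ hI')).trans (hc w)
    rw [card_insert_of_notMem hvR, mul_add, mul_one]
    linarith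

theorem exists_inducedEdgeCount_eq_of_le_adjCount {I : Finset V} (hI : G.IsIndepSet (I : Set V))
    {w : V} {k : ℕ} (hk : k ≤ G.adjCount I w) : ∃ S, G.inducedEdgeCount S = k := by
  obtain ⟨K, hK, rfl⟩ := exists_subset_card_eq hk
  have hKI : K ⊆ I := hK.trans (filter_subset _ _)
  have hwK : w ∉ K := fun hw => G.irrefl (mem_filter.1 (hK hw)).2
  refine ⟨insert w K, ?_⟩
  rw [G.inducedEdgeCount_insert hwK, G.inducedEdgeCount_eq_zero_of_isIndepSet
    (hI.mono (coe_subset.2 hKI)), adjCount,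
    filter_true_of_mem fun u hu => (mem_filter.1 (hK hu)).2, zero_add]

theorem exists_inducedEdgeCount_eq {I : Finset V} (hI : G.IsIndepSet (I : Set V))
    (hnbr : ∀ v ∈ I, ∃ w, G.Adj v w) {k : ℕ} (hcard : (k - 1) ^ 2 < #I) :
    ∃ S, G.inducedEdgeCount S = k := by
  by_cases hstar : ∃ w, k ≤ G.adjCount I w
  · obtain ⟨w, hw⟩ := hstar
    exact exists_inducedEdgeCount_eq_of_le_adjCount hI hw
  push Not at hstar
  obtain ⟨T, R, hS, -, hIR⟩ :=
    exists_isScaffold hI hnbr (c := k - 1) (fun w => by have := hstar w; omega) I subset_rfl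
  have hkR : k - 1 < #R := Nat.lt_of_mul_lt_mul_left ((sq (k - 1)) ▸ hcard.trans_le hIR)
  exact hS.exists_inducedEdgeCount_eq k (by have := hS.card_le_sum; omega)

end SimpleGraph

theorem sufficiently_many_small_degree_vertices_general {V : Type*} [Fintype V]
    (G : SimpleGraph V) [DecidableRel G.Adj] (d k : ℕ) (hk : 1 ≤ k)
    (h : (d + 1) * (k - 1) ^ 2 <
      (Finset.univ.filter fun v : V => 1 ≤ G.degree v ∧ G.degree v ≤ d).card) :
    HasKEdgeInducedSubgraph G k := by
  classical
  set A := Finset.univ.filter fun v : V => 1 ≤ G.degree v ∧ G.degree v ≤ d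
  obtain ⟨I, hIA, hI, hAI⟩ :=
    G.exists_isIndepSet_subset_card_le A fun v hv => (mem_filter.1 hv).2.2
  have hnbr : ∀ v ∈ I, ∃ w, G.Adj v w := fun v hv =>
    G.degree_pos_iff_exists_adj v |>.1 (mem_filter.1 (hIA hv)).2.1
  have hcard : (k - 1) ^ 2 < #I := Nat.lt_of_mul_lt_mul_left (h.trans_le hAI)
  obtain ⟨S, hS⟩ := SimpleGraph.exists_inducedEdgeCount_eq hI hnbr hcard
  exact G.hasKEdgeInducedSubgraph_of_inducedEdgeCount_eq hk hS

theorem sufficiently_many_small_degree_vertices {V : Type*} [Fintype V]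
    (G : SimpleGraph V) [DecidableRel G.Adj] (d k : ℕ) (hd : 1 ≤ d) (hk : 1 ≤ k)
    (h : (d + 1) * (k - 1) ^ 2 <
      (Finset.univ.filter fun v : V => 1 ≤ G.degree v ∧ G.degree v ≤ d).card) :
    HasKEdgeInducedSubgraph G k :=
  sufficiently_many_small_degree_vertices_general G d k hk h
end

section
/- Let m, n, p ≥ 1 be natural numbers and G a finite simple graph. Let A, B ⊆ V(G) be disjoint sets such that every u ∈ A has at least p neighbors in B. If |A| > (m−1)(n−1)^p, then (i) either there exist m pairwise distinct vertices u_1, …, u_m ∈ A and p pairwise distinct vertices v_1, …, v_p ∈ B with {u_i, v_j} an edge of G for every i ∈ {1,…,m} and j ∈ {1,…,p}, (ii) or there exist pairwise distinct vertices u_1, …, u_n ∈ A and pairwise distinct vertices v_1, …, v_n ∈ B such that for all i, j ∈ {1,…,n}, {u_i, v_j} is an edge of G if and only if i = j. -/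
/-!
Induction on `p`. If some `b ∈ B` has more than `(m - 1) (n - 1) ^ (p - 1)` neighbours in `A`,
apply the induction hypothesis to these neighbours and `B \ {b}`, and add `b` to the biclique
it may return. Otherwise take a minimal `C ⊆ B` dominating `A`: by minimality every vertex of `C`
has a private neighbour in `A`, which yields an induced matching of size `#C`, and double counting
gives `#A ≤ #C (m - 1) (n - 1) ^ (p - 1)`, hence `#C ≥ n`.
-/

open Finset

section

variable {α β : Type*} (r : α → β → Prop)

/-- `T` is the `β`-side of an induced matching between `A` and `T`. -/
def HasPrivateNeighbours (A : Finset α) (T : Finset β) : Prop :=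
  ∀ b ∈ T, ∃ a ∈ A, r a b ∧ ∀ b' ∈ T, r a b' → b' = b

variable {r}

theorem HasPrivateNeighbours.mono {A A' : Finset α} {T T' : Finset β}
    (h : HasPrivateNeighbours r A T) (hA : A ⊆ A') (hT : T' ⊆ T) :
    HasPrivateNeighbours r A' T' := fun b hb ↦ by
  obtain ⟨a, ha, hab, hpriv⟩ := h b (hT hb)
  exact ⟨a, hA ha, hab, fun b' hb' ↦ hpriv b' (hT hb')⟩

theorem exists_subset_hasPrivateNeighbours [DecidableEq β] {A : Finset α} {B : Finset β}
    (hcov : ∀ a ∈ A, ∃ b ∈ B, r a b) :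
    ∃ C ⊆ B, (∀ a ∈ A, ∃ b ∈ C, r a b) ∧ HasPrivateNeighbours r A C := by
  obtain ⟨C, hCB, hmin⟩ :=
    exists_minimal_le_of_wellFoundedLT (fun C ↦ ∀ a ∈ A, ∃ b ∈ C, r a b) B hcov
  refine ⟨C, hCB, hmin.prop, fun b hb ↦ ?_⟩
  by_contra! hnot
  -- without a private neighbour, `b` can be dropped from the minimal cover `C`
  refine hmin.not_lt (y := C.erase b) (fun a ha ↦ ?_) (erase_ssubset hb)
  obtain ⟨b', hb', hab'⟩ := hmin.prop a ha
  by_cases hbb' : b' = b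
  · subst hbb'
    obtain ⟨b'', hb'', hab'', hne⟩ := hnot a ha hab'
    exact ⟨b'', mem_erase.mpr ⟨hne, hb''⟩, hab''⟩
  · exact ⟨b', mem_erase.mpr ⟨hbb', hb'⟩, hab'⟩

theorem exists_fin_injective_of_card_eq {s : Finset α} {k : ℕ} (hs : #s = k) :
    ∃ f : Fin k → α, Function.Injective f ∧ ∀ i, f i ∈ s :=
  let e := (s.equivFinOfCardEq hs).symm
  ⟨fun i ↦ e i, Subtype.val_injective.comp e.injective, fun i ↦ (e i).2⟩

theorem HasPrivateNeighbours.exists_fin {A : Finset α} {T : Finset β} {n : ℕ}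
    (h : HasPrivateNeighbours r A T) (hT : #T = n) :
    ∃ u : Fin n → α, ∃ v : Fin n → β, Function.Injective u ∧ Function.Injective v ∧
      (∀ i, u i ∈ A) ∧ (∀ i, v i ∈ T) ∧ ∀ i j, r (u i) (v j) ↔ i = j := by
  obtain ⟨v, hv, hvT⟩ := exists_fin_injective_of_card_eq hT
  choose u huA huv hpriv using fun i ↦ h (v i) (hvT i)
  have hiff : ∀ i j, r (u i) (v j) ↔ i = j := fun i j ↦
    ⟨fun hij ↦ (hv (hpriv i (v j) (hvT j) hij)).symm, fun hij ↦ hij ▸ huv i⟩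
  refine ⟨u, v, fun i j hij ↦ ?_, hv, huA, hvT, hiff⟩
  exact ((hiff j i).mp (hij ▸ huv i)).symm

variable [DecidableRel r]

theorem exists_hasPrivateNeighbours_of_bipartiteBelow_le [DecidableEq β] {A : Finset α}
    {B : Finset β} {d n : ℕ} (hcov : ∀ a ∈ A, ∃ b ∈ B, r a b)
    (hdeg : ∀ b ∈ B, #(A.bipartiteBelow r b) ≤ d) (hA : (n - 1) * d < #A) :
    ∃ T ⊆ B, #T = n ∧ HasPrivateNeighbours r A T := by
  obtain ⟨C, hCB, hCcov, hC⟩ := exists_subset_hasPrivateNeighbours hcov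
  have hcount : #A * 1 ≤ #C * d := card_mul_le_card_mul r
    (fun a ha ↦ card_pos.mpr <| by simpa [bipartiteAbove, Finset.Nonempty] using hCcov a ha)
    (fun b hb ↦ hdeg b (hCB hb))
  have hn : n ≤ #C := by
    have := Nat.lt_of_mul_lt_mul_right (a := d) (by omega : (n - 1) * d < #C * d)
    omega
  obtain ⟨T, hTC, hT⟩ := exists_subset_card_eq hn
  exact ⟨T, hTC.trans hCB, hT, hC.mono Subset.rfl hTC⟩

theorem exists_biclique_or_hasPrivateNeighbours [DecidableEq β] (m n : ℕ) :
    ∀ (p : ℕ) (A : Finset α) (B : Finset β), (∀ a ∈ A, p ≤ #(B.bipartiteAbove r a)) →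
      (m - 1) * (n - 1) ^ p < #A →
      (∃ S ⊆ A, ∃ T ⊆ B, #S = m ∧ #T = p ∧ ∀ a ∈ S, ∀ b ∈ T, r a b) ∨
        ∃ T ⊆ B, #T = n ∧ HasPrivateNeighbours r A T
  | 0, A, B, _, hA => by
    obtain ⟨S, hSA, hS⟩ := exists_subset_card_eq (show m ≤ #A by simp at hA; omega)
    exact .inl ⟨S, hSA, ∅, empty_subset _, hS, card_empty, by simp⟩
  | p + 1, A, B, hdeg, hA => by
    by_cases hbig : ∃ b ∈ B, (m - 1) * (n - 1) ^ p < #(A.bipartiteBelow r b)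
    · obtain ⟨b, hb, hbA⟩ := hbig
      have hdeg' : ∀ a ∈ A.bipartiteBelow r b, p ≤ #((B.erase b).bipartiteAbove r a) := by
        intro a ha
        have herase : (B.erase b).bipartiteAbove r a = (B.bipartiteAbove r a).erase b :=
          filter_erase _ _ _
        rw [herase]
        have := pred_card_le_card_erase (s := B.bipartiteAbove r a) (a := b)
        have := hdeg a (filter_subset _ _ ha)
        omega
      rcases exists_biclique_or_hasPrivateNeighbours m n p _ _ hdeg' hbA with
        ⟨S, hS, T, hT, hScard, hTcard, hST⟩ | ⟨T, hT, hTcard, hpriv⟩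
      · have hbT : b ∉ T := fun h ↦ notMem_erase b B (hT h)
        refine .inl ⟨S, hS.trans (filter_subset _ _), insert b T, ?_, hScard, ?_, ?_⟩
        · exact insert_subset hb (hT.trans (erase_subset _ _))
        · rw [card_insert_of_notMem hbT, hTcard]
        · intro a ha b' hb'
          rcases mem_insert.mp hb' with rfl | hb'
          · exact (mem_filter.mp (hS ha)).2
          · exact hST a ha b' hb'
      · exact .inr ⟨T, hT.trans (erase_subset _ _), hTcard,
          hpriv.mono (filter_subset _ _) Subset.rfl⟩
    · push Not at hbig
      refine .inr (exists_hasPrivateNeighbours_of_bipartiteBelow_le (fun a ha ↦ ?_) hbig ?_)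
      · obtain ⟨b, hb⟩ := card_pos.mp (Nat.lt_of_lt_of_le (Nat.succ_pos p) (hdeg a ha))
        exact ⟨b, (mem_filter.mp hb).1, (mem_filter.mp hb).2⟩
      · convert hA using 1; ring

end

theorem bipartite_matching_lemma_general_general {V : Type*} [DecidableEq V]
    (G : SimpleGraph V) [DecidableRel G.Adj]
    (m n p : ℕ)
    (A B : Finset V)
    (hnb : ∀ u ∈ A, p ≤ (B.filter fun w => G.Adj u w).card)
    (hcard : (m - 1) * (n - 1) ^ p < A.card) :
    (∃ u : Fin m → V, ∃ v : Fin p → V, Function.Injective u ∧ Function.Injective v ∧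
      (∀ i, u i ∈ A) ∧ (∀ j, v j ∈ B) ∧
      ∀ (i : Fin m) (j : Fin p), G.Adj (u i) (v j)) ∨
    (∃ u : Fin n → V, ∃ v : Fin n → V, Function.Injective u ∧ Function.Injective v ∧
      (∀ i, u i ∈ A) ∧ (∀ i, v i ∈ B) ∧
      ∀ i j : Fin n, G.Adj (u i) (v j) ↔ i = j) := by
  rcases exists_biclique_or_hasPrivateNeighbours m n p A B hnb hcard with
    ⟨S, hSA, T, hTB, hS, hT, hST⟩ | ⟨T, hTB, hT, hpriv⟩
  · obtain ⟨u, hu, huS⟩ := exists_fin_injective_of_card_eq hS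
    obtain ⟨v, hv, hvT⟩ := exists_fin_injective_of_card_eq hT
    exact .inl ⟨u, v, hu, hv, fun i ↦ hSA (huS i), fun j ↦ hTB (hvT j),
      fun i j ↦ hST _ (huS i) _ (hvT j)⟩
  · obtain ⟨u, v, hu, hv, huA, hvT, huv⟩ := hpriv.exists_fin hT
    exact .inr ⟨u, v, hu, hv, huA, fun i ↦ hTB (hvT i), huv⟩

theorem bipartite_matching_lemma_general {V : Type*} [Fintype V] [DecidableEq V]
    (G : SimpleGraph V) [DecidableRel G.Adj]
    (m n p : ℕ) (hm : 1 ≤ m) (hn : 1 ≤ n) (hp : 1 ≤ p)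
    (A B : Finset V) (hdisj : Disjoint A B)
    (hnb : ∀ u ∈ A, p ≤ (B.filter fun w => G.Adj u w).card)
    (hcard : (m - 1) * (n - 1) ^ p < A.card) :
    (∃ u : Fin m → V, ∃ v : Fin p → V, Function.Injective u ∧ Function.Injective v ∧
      (∀ i, u i ∈ A) ∧ (∀ j, v j ∈ B) ∧
      ∀ (i : Fin m) (j : Fin p), G.Adj (u i) (v j)) ∨
    (∃ u : Fin n → V, ∃ v : Fin n → V, Function.Injective u ∧ Function.Injective v ∧
      (∀ i, u i ∈ A) ∧ (∀ i, v i ∈ B) ∧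
      ∀ i j : Fin n, G.Adj (u i) (v j) ↔ i = j) :=
  bipartite_matching_lemma_general_general G m n p A B hnb hcard
end
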